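/- arXiv:2002.00355 — 2 statements merged into one kernel-verified Lean document; each statement's English description precedes it below -/
import Mathlib

section
/- There is no centrally symmetric 3-dimensional polytope with exactly 6 vertices and exactly 6 facets. Equivalently, if P ⊂ ℝ³ is a 3-polytope with −P = P and f₀(P) = 6, then P is simplicial and hence f₂(P) = 8 ≠ 6. -/
open scoped BigOperators

/-- `P` is a 3-dimensional polytope in `ℝ³`: the convex hull of finitely many
points whose affine hull is 3-dimensional. -/
def IsPolytope3 (P : Set (Fin 3 → ℝ)) : Prop :=
  (∃ V : Finset (Fin 3 → ℝ), P = convexHull ℝ (V : Set (Fin 3 → ℝ))) ∧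
    Module.finrank ℝ (vectorSpan ℝ P) = 3

/-- `F` is a (proper, nonempty) face of `P`: the intersection of `P` with a
supporting hyperplane, excluding `∅` and `P` itself. -/
def IsFace (P F : Set (Fin 3 → ℝ)) : Prop :=
  ∃ (a : Fin 3 → ℝ) (b : ℝ),
    (∀ x ∈ P, ∑ i, a i * x i ≤ b) ∧
    F = {x ∈ P | ∑ i, a i * x i = b} ∧ F ≠ ∅ ∧ F ≠ P

/-- dimension of a face. -/
noncomputable def faceDim (F : Set (Fin 3 → ℝ)) : ℕ :=
  Module.finrank ℝ (vectorSpan ℝ F)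

/-- `fVec P i` is the number of `i`-dimensional faces of `P`. -/
noncomputable def fVec (P : Set (Fin 3 → ℝ)) (i : ℕ) : ℕ :=
  Set.ncard {F | IsFace P F ∧ faceDim F = i}

/-!
The vertex set `V` of `P` is finite, and central symmetry gives `-V = V` and `0 ∉ V`. Every vertex
of a polytope is exposed, so the six `0`-faces are the six vertices and `V = {±b₁, ±b₂, ±b₃}`;
as `V` spans `ℝ³`, `b` is a basis and `P` is its cross-polytope. A proper face of a centrally
symmetric polytope contains no antipodal pair of vertices, so the vertices of a `2`-face lie among
`ε₁b₁, ε₂b₂, ε₃b₃` for some signs `εᵢ = ±1`, and a `2`-dimensional face needs all three of them.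
Conversely each such triangle is the face cut out by `∑ εᵢ bᵢ* = 1`. Hence the facets are the
`2³ = 8` triangles `conv {ε₁b₁, ε₂b₂, ε₃b₃}`.
-/

open Set Module

section Convex

variable {E : Type*} [AddCommGroup E] [Module ℝ E]

def IsProperFace (P F : Set E) : Prop :=
  ∃ (f : Dual ℝ E) (b : ℝ), (∀ x ∈ P, f x ≤ b) ∧ F = {x ∈ P | f x = b} ∧ F ≠ ∅ ∧ F ≠ P

theorem isFace_iff_isProperFace {P F : Set (Fin 3 → ℝ)} : IsFace P F ↔ IsProperFace P F := by
  unfold IsFace IsProperFace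
  exact ((dotProductEquiv ℝ (Fin 3)).surjective.exists (p := fun f : Dual ℝ (Fin 3 → ℝ) =>
    ∃ b, (∀ x ∈ P, f x ≤ b) ∧ F = {x ∈ P | f x = b} ∧ F ≠ ∅ ∧ F ≠ P)).symm

theorem sep_convexHull_eq_convexHull_sep {s : Set E} {f : Dual ℝ E} {b : ℝ}
    (hs : ∀ x ∈ s, f x ≤ b) :
    {x ∈ convexHull ℝ s | f x = b} = convexHull ℝ {x ∈ s | f x = b} := by
  classical
  refine Subset.antisymm ?_ (convexHull_min (fun x hx => ⟨subset_convexHull ℝ s hx.1, hx.2⟩)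
    ((convex_convexHull ℝ s).inter (convex_hyperplane f.isLinear b)))
  rintro _ ⟨hx, hfx⟩
  rw [convexHull_eq] at hx
  obtain ⟨ι, t, w, z, hw₀, hw₁, hz, rfl⟩ := hx
  -- the slacks `b - f (z i)` are nonnegative, so points of positive weight lie on the hyperplane
  have hslack : ∀ i ∈ t, w i * (b - f (z i)) = 0 := by
    refine (Finset.sum_eq_zero_iff_of_nonneg fun i hi =>
      mul_nonneg (hw₀ i hi) (sub_nonneg.2 (hs _ (hz i hi)))).1 ?_
    rw [Finset.centerMass_eq_of_sum_1 _ _ hw₁, map_sum] at hfx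
    simp only [map_smul, smul_eq_mul] at hfx
    simp only [mul_sub, Finset.sum_sub_distrib, ← Finset.sum_mul, hw₁, one_mul, hfx, sub_self]
  rw [← Finset.centerMass_filter_ne_zero]
  refine Finset.centerMass_mem_convexHull _ (fun i hi => hw₀ i (Finset.mem_filter.1 hi).1) ?_
    fun i hi => ?_
  · rw [Finset.sum_filter_ne_zero, hw₁]; exact one_pos
  · obtain ⟨hit, hwi⟩ := Finset.mem_filter.1 hi
    exact ⟨hz i hit, (sub_eq_zero.1 ((mul_eq_zero.1 (hslack i hit)).resolve_left hwi)).symm⟩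

theorem isExtreme_sep_of_le {P : Set E} {f : Dual ℝ E} {b : ℝ} (hP : ∀ x ∈ P, f x ≤ b) :
    IsExtreme ℝ P {x ∈ P | f x = b} := by
  refine ⟨sep_subset _ _, fun x₁ h₁ x₂ h₂ x ⟨_, hx⟩ ⟨a, c, ha, hc, hac, hseg⟩ => ⟨h₁, ?_⟩⟩
  rw [← hseg, map_add, map_smul, map_smul, smul_eq_mul, smul_eq_mul] at hx
  refine le_antisymm (hP x₁ h₁) (le_of_mul_le_mul_left ?_ ha)
  linarith [mul_le_mul_of_nonneg_left (hP x₂ h₂) hc.le, congrArg (· * b) hac]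

theorem extremePoints_sep_of_le {P : Set E} {f : Dual ℝ E} {b : ℝ} (hP : ∀ x ∈ P, f x ≤ b) :
    extremePoints ℝ {x ∈ P | f x = b} = {x ∈ extremePoints ℝ P | f x = b} := by
  rw [(isExtreme_sep_of_le hP).extremePoints_eq]
  ext x
  exact ⟨fun ⟨⟨_, hx⟩, hxe⟩ => ⟨hxe, hx⟩, fun ⟨hxe, hx⟩ => ⟨⟨hxe.1, hx⟩, hxe⟩⟩

theorem vectorSpan_convexHull (s : Set E) : vectorSpan ℝ (convexHull ℝ s) = vectorSpan ℝ s := by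
  rw [← direction_affineSpan, affineSpan_convexHull, direction_affineSpan]

theorem vectorSpan_le_span (s : Set E) : vectorSpan ℝ s ≤ Submodule.span ℝ s := by
  rw [vectorSpan_def, Submodule.span_le]
  rintro _ ⟨p, hp, q, hq, rfl⟩
  exact sub_mem (Submodule.subset_span hp) (Submodule.subset_span hq)

theorem finrank_vectorSpan_add_one_le_ncard {s : Set E} (hs : s.Finite) (hne : s.Nonempty) :
    finrank ℝ (vectorSpan ℝ s) + 1 ≤ s.ncard := by
  classical
  obtain ⟨t, rfl⟩ := hs.exists_finset_coe
  have hpos : 0 < t.card := Finset.card_pos.2 (Finset.coe_nonempty.1 hne)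
  have := finrank_vectorSpan_image_finset_le ℝ id t (n := t.card - 1) (by omega)
  rw [Finset.image_id] at this
  rw [ncard_coe_finset]
  omega

end Convex

section Symmetric

variable {E : Type*} [AddCommGroup E] [Module ℝ E] {P : Set E}

theorem extremePoints_neg (s : Set E) : extremePoints ℝ (-s) = -extremePoints ℝ s := by
  rw [← image_neg_eq_neg, ← image_neg_eq_neg]
  exact (image_extremePoints (LinearEquiv.neg ℝ) s).symm

theorem zero_notMem_extremePoints (hsym : -P = P) (hP : ¬P.Subsingleton) :
    (0 : E) ∉ extremePoints ℝ P := by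
  intro h0
  obtain ⟨x, hx, hx0⟩ := (not_subsingleton_iff.1 hP).exists_ne 0
  have hnx : -x ∈ P := hsym ▸ neg_mem_neg.2 hx
  have hmid : (0 : E) ∈ openSegment ℝ x (-x) :=
    ⟨1 / 2, 1 / 2, by norm_num, by norm_num, by norm_num, by rw [smul_neg, add_neg_cancel]⟩
  exact hx0 (h0.2 hx hnx hmid)

theorem sep_eq_self_of_neg_mem_sep (hsym : -P = P) {f : Dual ℝ E} {b : ℝ}
    (hP : ∀ x ∈ P, f x ≤ b) {v : E} (hv : f v = b) (hnv : f (-v) = b) :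
    {x ∈ P | f x = b} = P := by
  rw [map_neg, hv] at hnv
  refine sep_eq_self_iff_mem_true.2 fun x hx => le_antisymm (hP x hx) ?_
  have := hP (-x) (hsym ▸ neg_mem_neg.2 hx)
  rw [map_neg] at this
  linarith

end Symmetric

theorem Set.exists_disjoint_union_neg_eq {α : Type*} [InvolutiveNeg α] {s : Set α} (hs : -s = s)
    (h : ∀ x ∈ s, -x ≠ x) : ∃ t : Set α, Disjoint t (-t) ∧ t ∪ -t = s := by
  -- any linear order picks one point out of each antipodal pair
  classical
  let : LinearOrder α := linearOrderOfSTO WellOrderingRel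
  refine ⟨{x ∈ s | x < -x}, disjoint_left.2 fun x hx hnx => ?_, ?_⟩
  · exact lt_asymm hx.2 (by simpa using hnx.2)
  · ext x
    refine ⟨fun hx => ?_, fun hx => ?_⟩
    · rcases hx with hx | hx
      · exact hx.1
      · exact hs ▸ mem_neg.2 hx.1
    · rcases lt_trichotomy x (-x) with hlt | heq | hgt
      · exact Or.inl ⟨hx, hlt⟩
      · exact absurd heq.symm (h x hx)
      · exact Or.inr ⟨hs ▸ neg_mem_neg.2 hx, by simpa using hgt⟩

theorem exists_basis_eq_range_union_neg {E : Type*} [AddCommGroup E] [Module ℝ E]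
    [FiniteDimensional ℝ E] {V : Set E} (hV : V.Finite) (hsym : -V = V) (h0 : (0 : E) ∉ V)
    (hspan : Submodule.span ℝ V = ⊤) {n : ℕ} (hn : finrank ℝ E = n) (hcard : V.ncard = 2 * n) :
    ∃ B : Basis (Fin n) ℝ E, V = range B ∪ -range B := by
  subst hn
  have := IsAddTorsionFree.of_isTorsionFree ℝ E
  obtain ⟨t, hdisj, rfl⟩ :=
    Set.exists_disjoint_union_neg_eq hsym fun x hx hx' => h0 (self_eq_neg.1 hx'.symm ▸ hx)
  have ht : t.Finite := hV.subset subset_union_left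
  have htcard : t.ncard = finrank ℝ E := by
    rw [ncard_union_eq hdisj ht ht.neg, ncard_neg] at hcard
    omega
  obtain ⟨t, rfl⟩ := ht.exists_finset_coe
  let e : t ≃ Fin (finrank ℝ E) := t.equivFinOfCardEq (ncard_coe_finset t ▸ htcard)
  have hrange : range (fun i => (e.symm i : E)) = t := by
    rw [← Function.comp_def, e.symm.surjective.range_comp, Subtype.range_coe]
  have htspan : ⊤ ≤ Submodule.span ℝ (range fun i => (e.symm i : E)) := by
    rw [hrange, ← hspan, Submodule.span_union, Submodule.span_neg, sup_idem]
  refine ⟨basisOfTopLeSpanOfCardEqFinrank _ htspan (Fintype.card_fin _), ?_⟩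
  rw [coe_basisOfTopLeSpanOfCardEqFinrank, hrange]

section UnitsInt

variable {R : Type*} [Ring R] [LinearOrder R] [IsStrictOrderedRing R]

theorem Int.cast_units_le_one (u : ℤˣ) : ((u : ℤ) : R) ≤ 1 := by
  rcases Int.units_eq_one_or u with rfl | rfl <;> norm_num

theorem Int.cast_units_mul_eq_one_iff (u v : ℤˣ) : ((u * v : ℤˣ) : R) = 1 ↔ v = u := by
  rw [Int.cast_eq_one, Units.val_eq_one, mul_eq_one_iff_inv_eq, Int.units_inv_eq_self, eq_comm]

end UnitsInt

section CrossPolytope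

variable {E ι : Type*} [AddCommGroup E] [Module ℝ E] (B : Basis ι ℝ E)

def crossPolytope : Set E := convexHull ℝ (range B ∪ -range B)

def crossFacet (ε : ι → ℤˣ) : Set E := convexHull ℝ (range fun i => ε i • B i)

theorem mem_range_union_neg_range {x : E} :
    x ∈ range B ∪ -range B ↔ ∃ (δ : ℤˣ) (j : ι), δ • B j = x := by
  constructor
  · rintro (⟨j, rfl⟩ | ⟨j, hj⟩)
    · exact ⟨1, j, one_smul _ _⟩
    · exact ⟨-1, j, by simp [Units.smul_def, hj]⟩
  · rintro ⟨δ, j, rfl⟩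
    rcases Int.units_eq_one_or δ with rfl | rfl
    · exact Or.inl ⟨j, (one_smul _ _).symm⟩
    · exact Or.inr ⟨j, by simp [Units.smul_def]⟩

theorem neg_crossPolytope : -crossPolytope B = crossPolytope B := by
  rw [crossPolytope, ← convexHull_neg, union_neg, neg_neg, union_comm]

theorem extremePoints_crossPolytope : extremePoints ℝ (crossPolytope B) = range B ∪ -range B := by
  classical
  refine Subset.antisymm extremePoints_convexHull_subset fun x hx => ?_
  obtain ⟨δ, j, rfl⟩ := (mem_range_union_neg_range B).1 hx
  set g : Dual ℝ E := (δ : ℝ) • B.coord j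
  have hg : ∀ (δ' : ℤˣ) (i : ι), g (δ' • B i) = if i = j then ((δ * δ' : ℤˣ) : ℝ) else 0 := by
    intro δ' i
    simp [g, Units.smul_def, Finsupp.single_apply]
  have hmax : ∀ y ∈ range B ∪ -range B, g y ≤ 1 ∧ (g y = 1 → y = δ • B j) := by
    intro y hy
    obtain ⟨δ', i, rfl⟩ := (mem_range_union_neg_range B).1 hy
    rw [hg]
    split_ifs with hij
    · subst hij
      exact ⟨Int.cast_units_le_one _, fun h => by rw [(Int.cast_units_mul_eq_one_iff δ δ').1 h]⟩
    · norm_num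
  have hface : {y ∈ crossPolytope B | g y = 1} = {δ • B j} := by
    rw [crossPolytope, sep_convexHull_eq_convexHull_sep fun y hy => (hmax y hy).1]
    convert convexHull_singleton (δ • B j)
    refine Subset.antisymm (fun y hy => (hmax y hy.1).2 hy.2) (singleton_subset_iff.2 ⟨hx, ?_⟩)
    rw [hg, if_pos rfl, Int.cast_units_mul_eq_one_iff]
  rw [← isExtreme_singleton, ← hface]
  exact isExtreme_sep_of_le fun y hy =>
    convexHull_min (fun z hz => (hmax z hz).1) (convex_halfSpace_le g.isLinear 1) hy

variable [Fintype ι]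

noncomputable def signFunctional (ε : ι → ℤˣ) : Dual ℝ E := ∑ i, (ε i : ℝ) • B.coord i

theorem signFunctional_units_smul (ε : ι → ℤˣ) (δ : ℤˣ) (j : ι) :
    signFunctional B ε (δ • B j) = ((ε j * δ : ℤˣ) : ℝ) := by
  classical
  simp [signFunctional, Units.smul_def, Finsupp.single_apply, mul_comm]

theorem signFunctional_units_smul_eq_one_iff (ε : ι → ℤˣ) (δ : ℤˣ) (j : ι) :
    signFunctional B ε (δ • B j) = 1 ↔ δ = ε j := by
  rw [signFunctional_units_smul, Int.cast_units_mul_eq_one_iff]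

theorem signFunctional_le_one (ε : ι → ℤˣ) {x : E} (hx : x ∈ range B ∪ -range B) :
    signFunctional B ε x ≤ 1 := by
  obtain ⟨δ, j, rfl⟩ := (mem_range_union_neg_range B).1 hx
  rw [signFunctional_units_smul]
  exact Int.cast_units_le_one _

theorem sep_signFunctional_eq_one (ε : ι → ℤˣ) :
    {x ∈ range B ∪ -range B | signFunctional B ε x = 1} = range fun i => ε i • B i := by
  ext x
  simp only [mem_range_union_neg_range, mem_range]
  constructor
  · rintro ⟨⟨δ, j, rfl⟩, h⟩
    exact ⟨j, by rw [(signFunctional_units_smul_eq_one_iff B ε δ j).1 h]⟩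
  · rintro ⟨j, rfl⟩
    exact ⟨⟨ε j, j, rfl⟩, (signFunctional_units_smul_eq_one_iff B ε _ j).2 rfl⟩

theorem signFunctional_le_one_of_mem_crossPolytope (ε : ι → ℤˣ) {x : E}
    (hx : x ∈ crossPolytope B) : signFunctional B ε x ≤ 1 :=
  convexHull_min (fun _ hy => signFunctional_le_one B ε hy)
    (convex_halfSpace_le (signFunctional B ε).isLinear 1) hx

theorem crossFacet_eq_sep (ε : ι → ℤˣ) :
    crossFacet B ε = {x ∈ crossPolytope B | signFunctional B ε x = 1} := by
  rw [crossPolytope, sep_convexHull_eq_convexHull_sep fun _ hx => signFunctional_le_one B ε hx,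
    sep_signFunctional_eq_one, crossFacet]

theorem isProperFace_crossFacet [Nonempty ι] (ε : ι → ℤˣ) :
    IsProperFace (crossPolytope B) (crossFacet B ε) := by
  obtain ⟨i⟩ := ‹Nonempty ι›
  refine ⟨signFunctional B ε, 1, fun x hx => signFunctional_le_one_of_mem_crossPolytope B ε hx,
    crossFacet_eq_sep B ε, nonempty_iff_ne_empty.1 ⟨_, subset_convexHull ℝ _ ⟨i, rfl⟩⟩,
    fun h => ?_⟩
  have hopp : (-ε i) • B i ∈ crossFacet B ε :=
    h ▸ subset_convexHull ℝ _ ((mem_range_union_neg_range B).2 ⟨-ε i, i, rfl⟩)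
  rw [crossFacet_eq_sep, mem_sep_iff, signFunctional_units_smul_eq_one_iff] at hopp
  exact neg_units_ne_self (ε i) hopp.2

theorem finrank_vectorSpan_crossFacet [Nonempty ι] (ε : ι → ℤˣ) :
    finrank ℝ (vectorSpan ℝ (crossFacet B ε)) + 1 = Fintype.card ι := by
  rw [crossFacet, vectorSpan_convexHull]
  exact (B.linearIndependent.group_smul ε).affineIndependent.finrank_vectorSpan_add_one

theorem ncard_range_units_smul (ε : ι → ℤˣ) :
    (range fun i => ε i • B i).ncard = Fintype.card ι := by
  rw [ncard_range_of_injective (f := fun i => ε i • B i)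
    (B.linearIndependent.group_smul ε).injective, Nat.card_eq_fintype_card]

theorem crossFacet_injective : Function.Injective (crossFacet B) := by
  intro ε δ h
  funext i
  have hmem : ε i • B i ∈ crossFacet B δ := h ▸ subset_convexHull ℝ _ ⟨i, rfl⟩
  rw [crossFacet_eq_sep] at hmem
  exact (signFunctional_units_smul_eq_one_iff B δ (ε i) i).1 hmem.2

theorem extremePoints_crossFacet (ε : ι → ℤˣ) :
    extremePoints ℝ (crossFacet B ε) = range fun i => ε i • B i := by
  rw [crossFacet_eq_sep, extremePoints_sep_of_le fun _ hx =>
    signFunctional_le_one_of_mem_crossPolytope B ε hx, extremePoints_crossPolytope,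
    sep_signFunctional_eq_one]

theorem IsProperFace.exists_eq_crossFacet {F : Set E} (hF : IsProperFace (crossPolytope B) F)
    (hdim : Fintype.card ι ≤ finrank ℝ (vectorSpan ℝ F) + 1) : ∃ ε, F = crossFacet B ε := by
  classical
  obtain ⟨f, b, hf, rfl, hne, hproper⟩ := hF
  set S := {x ∈ range B ∪ -range B | f x = b}
  have hFS : {x ∈ crossPolytope B | f x = b} = convexHull ℝ S :=
    sep_convexHull_eq_convexHull_sep fun x hx => hf x (subset_convexHull ℝ _ hx)
  have hanti : ∀ x ∈ S, -x ∉ S := fun x hx hnx =>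
    hproper (sep_eq_self_of_neg_mem_sep (neg_crossPolytope B) hf hx.2 hnx.2)
  set ε : ι → ℤˣ := fun i => if B i ∈ S then 1 else -1
  have hsub : S ⊆ range fun i => ε i • B i := by
    intro x hx
    obtain ⟨δ, j, rfl⟩ := (mem_range_union_neg_range B).1 hx.1
    refine ⟨j, ?_⟩
    rcases Int.units_eq_one_or δ with rfl | rfl
    · rw [one_smul] at hx
      simp [ε, hx]
    · have hj : B j ∉ S := fun h => hanti _ h (by simpa [Units.smul_def] using hx)
      simp [ε, hj]
  have hcard : (range fun i => ε i • B i).ncard ≤ S.ncard := by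
    have hSne : S.Nonempty := convexHull_nonempty_iff.1 (hFS ▸ nonempty_iff_ne_empty.2 hne)
    have := finrank_vectorSpan_add_one_le_ncard ((finite_range _).subset hsub) hSne
    rw [hFS, vectorSpan_convexHull] at hdim
    rw [ncard_range_units_smul]
    omega
  exact ⟨ε, by rw [hFS, eq_of_subset_of_ncard_le hsub hcard (finite_range _), crossFacet]⟩

theorem setOf_isProperFace_crossPolytope [Nonempty ι] :
    {F | IsProperFace (crossPolytope B) F ∧ finrank ℝ (vectorSpan ℝ F) + 1 = Fintype.card ι} =
      range (crossFacet B) := by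
  ext F
  constructor
  · rintro ⟨hF, hdim⟩
    obtain ⟨ε, rfl⟩ := hF.exists_eq_crossFacet B hdim.ge
    exact ⟨ε, rfl⟩
  · rintro ⟨ε, rfl⟩
    exact ⟨isProperFace_crossFacet B ε, finrank_vectorSpan_crossFacet B ε⟩

end CrossPolytope

section Polytope

variable {E : Type*} [AddCommGroup E] [Module ℝ E] [TopologicalSpace E] [IsTopologicalAddGroup E]
  [ContinuousSMul ℝ E] [T2Space E] [LocallyConvexSpace ℝ E] {V : Set E}

theorem exists_dual_sep_convexHull_eq_singleton (hV : V.Finite) {v : E}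
    (hv : v ∈ extremePoints ℝ (convexHull ℝ V)) :
    ∃ (f : Dual ℝ E) (b : ℝ), (∀ x ∈ convexHull ℝ V, f x ≤ b) ∧
      {x ∈ convexHull ℝ V | f x = b} = {v} := by
  have hvV : v ∈ V := extremePoints_convexHull_subset hv
  -- removing an extreme point leaves a convex set, which contains the hull of the other vertices
  have hsep : v ∉ convexHull ℝ (V \ {v}) := fun h =>
    (convexHull_min (sdiff_subset_sdiff_left (subset_convexHull ℝ V))
      ((convex_convexHull ℝ V).mem_extremePoints_iff_convex_sdiff.1 hv).2 h).2 rfl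
  obtain ⟨f, u, hfu, huv⟩ :=
    geometric_hahn_banach_closed_point (convex_convexHull ℝ _) (hV.sdiff.isClosed_convexHull ℝ) hsep
  have hlt : ∀ x ∈ V, x ≠ v → f x < f v := fun x hx hxv =>
    (hfu x (subset_convexHull ℝ _ ⟨hx, hxv⟩)).trans huv
  have hVv : ∀ x ∈ V, f.toLinearMap x ≤ f v := fun x hx =>
    (eq_or_ne x v).elim (fun h => h ▸ le_rfl) fun h => (hlt x hx h).le
  refine ⟨f.toLinearMap, f v,
    fun x hx => convexHull_min hVv (convex_halfSpace_le f.toLinearMap.isLinear _) hx, ?_⟩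
  have hface : {x ∈ V | f.toLinearMap x = f v} = {v} :=
    Subset.antisymm (fun x ⟨hx, hfx⟩ => by_contra fun h => (hlt x hx h).ne hfx)
      (singleton_subset_iff.2 ⟨hvV, rfl⟩)
  rw [sep_convexHull_eq_convexHull_sep hVv, hface, convexHull_singleton]

theorem convexHull_extremePoints_convexHull (hV : V.Finite) :
    convexHull ℝ (extremePoints ℝ (convexHull ℝ V)) = convexHull ℝ V := by
  have hfin : (extremePoints ℝ (convexHull ℝ V)).Finite := hV.subset extremePoints_convexHull_subset
  rw [← (hfin.isClosed_convexHull ℝ).closure_eq]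
  exact closure_convexHull_extremePoints (hV.isCompact_convexHull ℝ) (convex_convexHull ℝ V)

theorem setOf_isProperFace_finrank_eq_zero [FiniteDimensional ℝ E] (hV : V.Finite)
    (hP : ¬(convexHull ℝ V).Subsingleton) :
    {F | IsProperFace (convexHull ℝ V) F ∧ finrank ℝ (vectorSpan ℝ F) = 0} =
      (fun v => {v}) '' extremePoints ℝ (convexHull ℝ V) := by
  ext F
  constructor
  · rintro ⟨⟨f, b, hf, rfl, hne, -⟩, hdim⟩
    rw [Submodule.finrank_eq_zero, vectorSpan_eq_bot_iff_subsingleton] at hdim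
    obtain ⟨v, hv⟩ := nonempty_iff_ne_empty.2 hne
    rw [hdim.eq_singleton_of_mem hv]
    exact ⟨v, isExtreme_singleton.1 (hdim.eq_singleton_of_mem hv ▸ isExtreme_sep_of_le hf), rfl⟩
  · rintro ⟨v, hv, rfl⟩
    obtain ⟨f, b, hf, hfv⟩ := exists_dual_sep_convexHull_eq_singleton hV hv
    refine ⟨⟨f, b, hf, hfv.symm, singleton_ne_empty v,
      fun h => hP (h ▸ subsingleton_singleton)⟩, ?_⟩
    rw [vectorSpan_singleton, finrank_bot]

theorem exists_basis_convexHull_eq_crossPolytope [FiniteDimensional ℝ E] (hV : V.Finite)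
    (hsym : -convexHull ℝ V = convexHull ℝ V) (hP : ¬(convexHull ℝ V).Subsingleton)
    (hspan : vectorSpan ℝ (convexHull ℝ V) = ⊤) {n : ℕ} (hn : finrank ℝ E = n)
    (hcard : (extremePoints ℝ (convexHull ℝ V)).ncard = 2 * n) :
    ∃ B : Basis (Fin n) ℝ E, convexHull ℝ V = crossPolytope B := by
  have hW := convexHull_extremePoints_convexHull hV
  have hWspan : Submodule.span ℝ (extremePoints ℝ (convexHull ℝ V)) = ⊤ := by
    refine eq_top_iff.2 ?_
    calc ⊤ = vectorSpan ℝ (extremePoints ℝ (convexHull ℝ V)) := by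
          rw [← vectorSpan_convexHull, hW, hspan]
      _ ≤ _ := vectorSpan_le_span _
  obtain ⟨B, hB⟩ := exists_basis_eq_range_union_neg (hV.subset extremePoints_convexHull_subset)
    (by rw [← extremePoints_neg, hsym]) (zero_notMem_extremePoints hsym hP) hWspan hn hcard
  exact ⟨B, by rw [← hW, hB, crossPolytope]⟩

end Polytope

/-- A centrally symmetric 3-polytope with 6 vertices is simplicial and has 8
facets; in particular there is no centrally symmetric 3-polytope with
f-vector (6,6). -/
theorem centrally_symmetric_six_vertices_simplicial (P : Set (Fin 3 → ℝ))
    (hP : IsPolytope3 P) (hsym : -P = P) (h0 : fVec P 0 = 6) :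
    (∀ F : Set (Fin 3 → ℝ), IsFace P F → faceDim F = 2 →
        (Set.extremePoints ℝ F).ncard = 3) ∧ fVec P 2 = 8 := by
  obtain ⟨⟨V, rfl⟩, hdim⟩ := hP
  have hspan : vectorSpan ℝ (convexHull ℝ (V : Set (Fin 3 → ℝ))) = ⊤ :=
    Submodule.eq_top_of_finrank_eq (hdim.trans (finrank_fin_fun ℝ).symm)
  have hns : ¬(convexHull ℝ (V : Set (Fin 3 → ℝ))).Subsingleton := by
    rw [← vectorSpan_eq_bot_iff_subsingleton ℝ, hspan]
    exact top_ne_bot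
  have hvert : (extremePoints ℝ (convexHull ℝ (V : Set (Fin 3 → ℝ)))).ncard = 2 * 3 := by
    simp only [fVec, faceDim, isFace_iff_isProperFace] at h0
    rwa [setOf_isProperFace_finrank_eq_zero V.finite_toSet hns,
      ncard_image_of_injective _ singleton_injective] at h0
  obtain ⟨B, hB⟩ := exists_basis_convexHull_eq_crossPolytope V.finite_toSet hsym hns hspan
    (finrank_fin_fun ℝ) hvert
  have hfacets : {F | IsFace (crossPolytope B) F ∧ faceDim F = 2} = range (crossFacet B) := by
    ext F
    rw [← setOf_isProperFace_crossPolytope]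
    exact and_congr isFace_iff_isProperFace (by rw [faceDim, Fintype.card_fin]; omega)
  rw [hB]
  refine ⟨fun F hF hF2 => ?_, ?_⟩
  · obtain ⟨ε, rfl⟩ : F ∈ range (crossFacet B) := hfacets ▸ ⟨hF, hF2⟩
    rw [extremePoints_crossFacet, ncard_range_units_smul, Fintype.card_fin]
  · rw [fVec, hfacets, ncard_range_of_injective (crossFacet_injective B)]
    simp
end

section
/- For every integer n ≥ 3 and every pair (f₀, f₂) ∈ ℤ² with 2f₀ − f₂ ≥ 4, 2f₂ − f₀ ≥ 4 and f₀ ≡ f₂ ≡ 1 (mod n), one has (f₀, f₂) ∈ (n+1, n+1) + {(0,0), (n,n), (2n,2n)} + n·((2,1)ℕ + (1,2)ℕ). -/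
/-- The residue class `(1,1) mod n` inside the Steinitz cone is covered by the
three generators `(n+1,n+1)`, `(2n+1,2n+1)`, `(3n+1,3n+1)` plus the cone `n·C`. -/
theorem cyclic_residue_class_covered (n f0 f2 : ℤ) (hn : n ≥ 3)
    (h1 : 2 * f0 - f2 ≥ 4) (h2 : 2 * f2 - f0 ≥ 4)
    (h3 : f0 ≡ 1 [ZMOD n]) (h4 : f2 ≡ 1 [ZMOD n]) :
    ∃ w ∈ ({(0, 0), (n, n), (2 * n, 2 * n)} : Set (ℤ × ℤ)), ∃ a b : ℕ,
      (f0, f2) = (n + 1, n + 1) + w + n • (a • ((2, 1) : ℤ × ℤ) + b • ((1, 2) : ℤ × ℤ)) := by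
  obtain ⟨s, hs⟩ := h3.symm.dvd
  obtain ⟨t, ht⟩ := h4.symm.dvd
  -- hs : f0 - 1 = n * s, ht : f2 - 1 = n * t
  have hns : n * (2 * s - t) ≥ 3 := by nlinarith
  have hnt : n * (2 * t - s) ≥ 3 := by nlinarith
  have hst1 : 2 * s - t ≥ 1 := by nlinarith
  have hst2 : 2 * t - s ≥ 1 := by nlinarith
  set p : ℤ := 2 * s - t - 1 with hp
  set q : ℤ := 2 * t - s - 1 with hq
  have hp0 : 0 ≤ p := by omega
  have hq0 : 0 ≤ q := by omega
  have hmod : p % 3 = q % 3 := by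
    have hd : (3:ℤ) ∣ q - p := ⟨t - s, by rw [hp, hq]; ring⟩
    omega
  set k : ℤ := p % 3 with hk
  have hk0 : 0 ≤ k := Int.emod_nonneg p (by norm_num)
  have hk3 : k < 3 := Int.emod_lt_of_pos p (by norm_num)
  have hpdiv : p = 3 * (p / 3) + k := (Int.mul_ediv_add_emod p 3).symm
  have hqdiv : q = 3 * (q / 3) + k := by rw [hmod]; exact (Int.mul_ediv_add_emod q 3).symm
  have hpd0 : 0 ≤ p / 3 := Int.ediv_nonneg hp0 (by norm_num)
  have hqd0 : 0 ≤ q / 3 := Int.ediv_nonneg hq0 (by norm_num)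
  set a : ℕ := (p / 3).toNat with ha
  set b : ℕ := (q / 3).toNat with hb
  have hac : (a : ℤ) = p / 3 := Int.toNat_of_nonneg hpd0
  have hbc : (b : ℤ) = q / 3 := Int.toNat_of_nonneg hqd0
  have key0 : f0 = n + 1 + k * n + n * (2 * (a : ℤ) + b) := by
    rw [hac, hbc]; nlinarith [hpdiv, hqdiv]
  have key2 : f2 = n + 1 + k * n + n * ((a : ℤ) + 2 * b) := by
    rw [hac, hbc]; nlinarith [hpdiv, hqdiv]
  have hcases : k = 0 ∨ k = 1 ∨ k = 2 := by omega
  have final : ∀ w1 w2 : ℤ, f0 = n + 1 + w1 + n * (2 * (a : ℤ) + b) →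
      f2 = n + 1 + w2 + n * ((a : ℤ) + 2 * b) →
      (f0, f2) = ((n + 1, n + 1) : ℤ × ℤ) + (w1, w2) +
        n • (a • ((2, 1) : ℤ × ℤ) + b • ((1, 2) : ℤ × ℤ)) := by
    intro w1 w2 e1 e2
    simp only [Prod.ext_iff, Prod.smul_def, Prod.mk_add_mk, Prod.fst, Prod.snd,
      smul_eq_mul, nsmul_eq_mul]
    constructor <;> [rw [e1]; rw [e2]] <;> ring
  rcases hcases with h | h | h
  · exact ⟨(0, 0), by simp, a, b, final 0 0 (by rw [key0, h]; try ring) (by rw [key2, h]; try ring)⟩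
  · exact ⟨(n, n), by simp, a, b, final n n (by rw [key0, h]; try ring) (by rw [key2, h]; try ring)⟩
  · exact ⟨(2 * n, 2 * n), by simp, a, b,
      final (2 * n) (2 * n) (by rw [key0, h]; try ring) (by rw [key2, h]; try ring)⟩
end
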